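/- For every q ∈ ℂ with 0.4 ≤ |q| ≤ 0.5 and arg(q) ∈ [π/4, π/2], and every x ∈ ℂ with |x| = |q|^{-3/2}, one has |θ(q,x)| ≥ 0.0725. -/

import Mathlib

/-- The partial theta function `θ(q,x) = Σ_{j≥0} q^(j(j+1)/2) x^j`. -/
noncomputable def theta (q x : ℂ) : ℂ := ∑' j : ℕ, q ^ (j * (j + 1) / 2) * x ^ j

/-- The argument of a complex number, normalized to take values in `[0, 2π)`. -/
noncomputable def argTwoPi (z : ℂ) : ℝ :=
  if Complex.arg z < 0 then Complex.arg z + 2 * Real.pi else Complex.arg z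

set_option maxHeartbeats 1000000 in
theorem theta_lower_bound_q_04_05 (q : ℂ) (hq : 0.4 ≤ ‖q‖ ∧ ‖q‖ ≤ 0.5)
    (harg : argTwoPi q ∈ Set.Icc (Real.pi / 4) (Real.pi / 2)) (x : ℂ)
    (hx : ‖x‖ = ‖q‖ ^ (-(3 : ℝ) / 2 : ℝ)) :
    0.0725 ≤ ‖theta q x‖ := by
  obtain ⟨hr04, hr05⟩ := hq
  set r := ‖q‖ with hrdef
  have hr0 : (0:ℝ) < r := by linarith
  have hr1 : r < 1 := by linarith
  have hq0 : q ≠ 0 := by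
    intro h
    have : (0.4:ℝ) ≤ 0 := by simpa [hrdef, h] using hr04
    norm_num at this
  -- argument bounds
  have hφ : Real.pi/4 ≤ Complex.arg q ∧ Complex.arg q ≤ Real.pi/2 := by
    obtain ⟨h1, h2⟩ := harg
    unfold argTwoPi at h1 h2
    by_cases h : Complex.arg q < 0
    · rw [if_pos h] at h2
      have := Complex.neg_pi_lt_arg q
      have := Real.pi_pos
      linarith
    · rw [if_neg h] at h1 h2; exact ⟨h1, h2⟩
  set φ := Complex.arg q with hφdef
  have hpi := Real.pi_pos
  -- basic quantities
  set E := Real.exp (-(Real.log r) / 2) with hEdef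
  have hE0 : 0 < E := Real.exp_pos _
  have hEsq : E ^ 2 = r⁻¹ := by
    rw [hEdef, ← Real.exp_nat_mul]
    rw [show (2:ℕ) * (-(Real.log r)/2) = -Real.log r by push_cast; ring]
    rw [Real.exp_neg, Real.exp_log hr0]
  have hE : 1.4142 ≤ E := by nlinarith [hEsq, hE0, inv_anti₀ (show (0:ℝ) < r by linarith) hr05]
  -- |x| = E^3
  have hxE : ‖x‖ = E^3 := by
    rw [hx, Real.rpow_def_of_pos hr0, hEdef, ← Real.exp_nat_mul]
    congr 1
    push_cast
    ring
  -- u, s, v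
  set u := q * x with hudef
  set s := Complex.exp (Complex.log q / 2) with hsdef
  have hs0 : s ≠ 0 := Complex.exp_ne_zero _
  have hs2 : s ^ 2 = q := by
    rw [hsdef, sq, ← Complex.exp_add]
    rw [show Complex.log q / 2 + Complex.log q / 2 = Complex.log q by ring]
    exact Complex.exp_log hq0
  have habs_s : ‖s‖ = Real.exp (Real.log r / 2) := by
    rw [hsdef, Complex.norm_exp]
    congr 1
    simp [Complex.div_re, Complex.log_re]
    try ring
  have habs_u : ‖u‖ = E := by
    have : r * E ^ 3 = E := by
      have : r = E⁻¹ ^ 2 := by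
        rw [← inv_inv r, ← hEsq]; rw [inv_pow]
      rw [this]; field_simp
    rw [hudef, norm_mul, hxE, ← hrdef, this]
  set v := s * u with hvdef
  have habs_v : ‖v‖ = 1 := by
    rw [hvdef, norm_mul, habs_s, habs_u, hEdef, ← Real.exp_add]
    rw [show Real.log r / 2 + -(Real.log r)/2 = 0 by ring, Real.exp_zero]
  -- head identity
  have hvconj : v * (starRingEnd ℂ) v = 1 := by
    rw [Complex.mul_conj, Complex.normSq_eq_norm_sq, habs_v]
    norm_num
  have hv2 : v ^ 2 = q * u ^ 2 := by
    rw [hvdef, mul_pow, hs2]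
  have hvs : v * (1/s) = u := by
    rw [hvdef]; field_simp
  have hhead_eq : 1 + u + q * u^2 = v * (2 * (v.re : ℂ) + 1/s) := by
    have hac := Complex.add_conj v
    have step1 : v * (2 * (v.re:ℂ) + 1/s) = v * (v + (starRingEnd ℂ) v) + v * (1/s) := by
      rw [hac]; push_cast; ring
    have step2 : v * (v + (starRingEnd ℂ) v) + v * (1/s) = v ^ 2 + v * (starRingEnd ℂ) v + u := by
      rw [hvs]; ring
    rw [step1, step2, hvconj, hv2]; ring
  -- imaginary part of 1/s
  have hinv_s : (1/s) = Complex.exp (-(Complex.log q / 2)) := by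
    rw [Complex.exp_neg, hsdef, one_div]
  have him : (1/s).im = -(E * Real.sin (φ/2)) := by
    rw [hinv_s, Complex.exp_im]
    have h1 : (-(Complex.log q / 2)).re = -(Real.log r)/2 := by
      simp [Complex.div_re, Complex.log_re]; ring
    have h2 : (-(Complex.log q / 2)).im = -(φ/2) := by
      simp [Complex.log_im]
      try ring
    rw [h1, h2, Real.sin_neg, hEdef]; ring
  -- sin(φ/2) lower bound
  have hsin8 : Real.sin (Real.pi/8) ≥ 0.3826 := by
    rw [Real.sin_pi_div_eight]
    have hsq2 : Real.sqrt 2 ≤ 1.41422 := by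
      nlinarith [Real.sq_sqrt (show (0:ℝ) ≤ 2 by norm_num), Real.sqrt_nonneg 2]
    have h1 : (0:ℝ) ≤ 2 - Real.sqrt 2 := by linarith
    have h2 := Real.sq_sqrt h1
    have h3 := Real.sqrt_nonneg (2 - Real.sqrt 2)
    nlinarith
  have hsinφ : Real.sin (φ/2) ≥ 0.3826 := by
    rcases hφ with ⟨ha, hb⟩
    have hmono : Real.sin (Real.pi/8) ≤ Real.sin (φ/2) := by
      apply Real.strictMonoOn_sin.monotoneOn
      · constructor <;> [linarith; linarith]
      · constructor <;> [linarith; linarith]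
      · linarith
    linarith
  -- head lower bound
  have hhead : 0.5410 ≤ ‖1 + u + q * u^2‖ := by
    rw [hhead_eq, norm_mul, habs_v, one_mul]
    have h1 : |(2 * (v.re:ℂ) + 1/s).im| ≤ ‖2 * (v.re:ℂ) + 1/s‖ :=
      Complex.abs_im_le_norm _
    have h2 : (2 * (v.re:ℂ) + 1/s).im = (1/s).im := by simp
    rw [h2, him] at h1
    have h3 : E * Real.sin (φ/2) ≥ 1.4142 * 0.3826 := by
      have : (0:ℝ) ≤ Real.sin (φ/2) := by linarith
      nlinarith
    rw [abs_neg, abs_of_nonneg (mul_nonneg hE0.le (by linarith) : (0:ℝ) ≤ E * Real.sin (φ/2))] at h1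
    nlinarith
  -- tail bound
  set f : ℕ → ℂ := fun j => q ^ (j * (j + 1) / 2) * x ^ j with hfdef
  set c : ℝ := r ^ ((3:ℝ)/2) with hcdef
  set a : ℝ := r ^ ((5:ℝ)/2) with hadef
  have hc0 : 0 ≤ c := Real.rpow_nonneg hr0.le _
  have ha0 : 0 ≤ a := Real.rpow_nonneg hr0.le _
  have hcb : c ≤ 0.3536 := by
    have h1 : c ^ 2 = r ^ 3 := by
      rw [hcdef, ← Real.rpow_natCast (r ^ ((3:ℝ)/2)) 2, ← Real.rpow_mul hr0.le,
        ← Real.rpow_natCast r 3]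
      norm_num
    have hr3 : r ^ 3 ≤ (0.5:ℝ)^3 := pow_le_pow_left₀ hr0.le hr05 3
    nlinarith
  have hab : a ≤ 0.1768 := by
    have h1 : a ^ 2 = r ^ 5 := by
      rw [hadef, ← Real.rpow_natCast (r ^ ((5:ℝ)/2)) 2, ← Real.rpow_mul hr0.le,
        ← Real.rpow_natCast r 5]
      norm_num
    have hr5 : r ^ 5 ≤ (0.5:ℝ)^5 := pow_le_pow_left₀ hr0.le hr05 5
    nlinarith
  have ha1 : a < 1 := by linarith
  have hterm : ∀ j : ℕ, ‖f (j+3)‖ ≤ c * a ^ j := by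
    intro j
    have hm2 : (((j+3) * ((j+3)+1) / 2 : ℕ) : ℝ) = ((j:ℝ)^2 + 7*j + 12)/2 := by
      have h2m : ((j+3) * ((j+3)+1) / 2 : ℕ) * 2 = j^2 + 7*j + 12 := by
        rw [Nat.div_mul_cancel (Nat.even_mul_succ_self (j+3)).two_dvd]
        ring
      have := congrArg (fun n : ℕ => (n : ℝ)) h2m
      push_cast at this
      linarith
    rw [hfdef]
    simp only [norm_mul, norm_pow, hx]
    rw [← Real.rpow_natCast r ((j+3) * ((j+3)+1) / 2),
      ← Real.rpow_natCast (r ^ (-(3:ℝ)/2 : ℝ)) (j+3), ← Real.rpow_mul hr0.le,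
      ← Real.rpow_add hr0, hcdef, hadef,
      ← Real.rpow_natCast (r ^ ((5:ℝ)/2)) j, ← Real.rpow_mul hr0.le, ← Real.rpow_add hr0]
    apply Real.rpow_le_rpow_of_exponent_ge hr0 hr1.le
    rw [hm2]
    push_cast
    have hj : (j:ℝ) ≤ (j:ℝ)^2 := by
      have : j ≤ j^2 := Nat.le_self_pow two_ne_zero j
      exact_mod_cast this
    nlinarith
  have hgeom : Summable (fun j : ℕ => c * a ^ j) :=
    (summable_geometric_of_lt_one ha0 ha1).mul_left c
  have htail_sum : Summable (fun j : ℕ => f (j+3)) := by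
    apply Summable.of_norm_bounded hgeom
    intro j
    exact hterm j
  have hf : Summable f := (summable_nat_add_iff 3).mp htail_sum
  have htail_norm_sum : Summable (fun j : ℕ => ‖f (j+3)‖) := by
    apply Summable.of_nonneg_of_le (fun j => norm_nonneg _) _ hgeom
    intro j
    exact hterm j
  have htail : ‖∑' j : ℕ, f (j+3)‖ ≤ 0.4296 := by
    calc ‖∑' j : ℕ, f (j+3)‖ ≤ ∑' j : ℕ, ‖f (j+3)‖ := norm_tsum_le_tsum_norm htail_norm_sum
      _ ≤ ∑' j : ℕ, c * a ^ j := by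
          apply Summable.tsum_le_tsum _ htail_norm_sum hgeom
          intro j
          exact hterm j
      _ = c * (1 - a)⁻¹ := by rw [tsum_mul_left, tsum_geometric_of_lt_one ha0 ha1]
      _ ≤ 0.4296 := by
          rw [mul_inv_le_iff₀ (by linarith : (0:ℝ) < 1 - a)]
          nlinarith
  -- assemble
  have hsplit : theta q x = (1 + u + q * u^2) + ∑' j : ℕ, f (j+3) := by
    rw [theta, ← hfdef, ← Summable.sum_add_tsum_nat_add 3 hf]
    congr 1
    rw [Finset.sum_range_succ, Finset.sum_range_succ, Finset.sum_range_one, hfdef]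
    norm_num [hudef]
    ring
  rw [hsplit]
  have htri : ‖1 + u + q*u^2‖ ≤
      ‖(1 + u + q*u^2) + ∑' j : ℕ, f (j+3)‖ + ‖∑' j : ℕ, f (j+3)‖ := by
    calc ‖1 + u + q*u^2‖
        = ‖((1 + u + q*u^2) + ∑' j : ℕ, f (j+3)) + (-(∑' j : ℕ, f (j+3)))‖ := by
          congr 1; ring
      _ ≤ _ := by
          refine (norm_add_le _ _).trans ?_
          rw [norm_neg]
  linarith
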